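/- arXiv:2408.02295 — 3 statements merged into one kernel-verified Lean document; each statement's English description precedes it below -/
import Mathlib

section
/- For every shape parameter β with 0 < β ≤ 2, the function f : ℝ → ℝ given by f(x) = exp(−|x|^β) is positive definite; that is, for every n ∈ ℕ, every tuple of points x : Fin n → ℝ, and every tuple of complex coefficients c : Fin n → ℂ, the sum ∑_{i,j} c i * conj (c j) * f (x i − x j) has nonnegative real part. -/
/-!
For `0 < β < 2` scaling gives `|u| ^ β = K⁻¹ * ∫₀^∞ (1 - cos (s * u)) * s ^ (-1 - β) ds` with
`0 < K < ∞`. Truncating this integral to compact intervals of `(0, ∞)` gives exponents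
`ψ u = ∫ w s * (1 - cos (s * u))` with `w ≥ 0` integrable, and
`exp (-ψ u) = exp (-∫ w) * exp (∫ w s * cos (s * u))` is positive definite: positive definite
functions form a closed convex cone, stable under multiplication by `cos (t * ·)` (expand
`cos (t * (x i - x j))` by the subtraction formula), hence under multiplication by
`∫ w s * cos (s * ·)`, hence by the exponential series under `exp` of that function. Let the
truncation exhaust `(0, ∞)`, and finally let `β ↑ 2`.
-/

open scoped Real

open MeasureTheory Filter Topology Set ComplexConjugate

def posDefForm (f : ℝ → ℝ) {n : ℕ} (x : Fin n → ℝ) (c : Fin n → ℂ) : ℝ :=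
  ∑ i, ∑ j, (c i * conj (c j)).re * f (x i - x j)

def IsPositiveDefinite (f : ℝ → ℝ) : Prop :=
  ∀ (n : ℕ) (x : Fin n → ℝ) (c : Fin n → ℂ), 0 ≤ posDefForm f x c

section posDefForm

variable {n : ℕ} (x : Fin n → ℝ) (c : Fin n → ℂ)

theorem re_sum_mul_ofReal_eq_posDefForm (f : ℝ → ℝ) :
    (∑ i, ∑ j, c i * conj (c j) * (f (x i - x j) : ℂ)).re = posDefForm f x c := by
  simp only [posDefForm, Complex.re_sum, Complex.re_mul_ofReal]

theorem posDefForm_const (a : ℝ) :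
    posDefForm (fun _ => a) x c = a * Complex.normSq (∑ i, c i) := by
  rw [← Complex.ofReal_re (Complex.normSq _), ← Complex.mul_conj, map_sum, Finset.sum_mul_sum]
  simp only [posDefForm, Complex.re_sum, Finset.mul_sum, mul_comm]

theorem posDefForm_add (f g : ℝ → ℝ) :
    posDefForm (fun u => f u + g u) x c = posDefForm f x c + posDefForm g x c := by
  simp only [posDefForm, mul_add, Finset.sum_add_distrib]

theorem posDefForm_const_mul (a : ℝ) (f : ℝ → ℝ) :
    posDefForm (fun u => a * f u) x c = a * posDefForm f x c := by
  simp only [posDefForm, Finset.mul_sum, mul_left_comm]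

theorem posDefForm_mul_cos (f : ℝ → ℝ) (t : ℝ) :
    posDefForm (fun u => f u * Real.cos (t * u)) x c =
      posDefForm f x (fun i => Real.cos (t * x i) * c i) +
        posDefForm f x (fun i => Real.sin (t * x i) * c i) := by
  simp only [posDefForm, ← Finset.sum_add_distrib]
  refine Finset.sum_congr rfl fun i _ => Finset.sum_congr rfl fun j _ => ?_
  simp only [map_mul, Complex.conj_ofReal, mul_mul_mul_comm _ (c i), ← Complex.ofReal_mul,
    Complex.re_ofReal_mul, mul_sub, Real.cos_sub]
  ring

theorem posDefForm_integral {α : Type*} [MeasurableSpace α] {μ : Measure α} {F : α → ℝ → ℝ}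
    (hF : ∀ u, Integrable (fun s => F s u) μ) :
    posDefForm (fun u => ∫ s, F s u ∂μ) x c = ∫ s, posDefForm (F s) x c ∂μ := by
  simp only [posDefForm, ← integral_const_mul]
  rw [integral_finsetSum _ fun _ _ => integrable_finsetSum _ fun _ _ => (hF _).const_mul _]
  exact Finset.sum_congr rfl fun _ _ =>
    (integral_finsetSum _ fun _ _ => (hF _).const_mul _).symm

theorem tendsto_posDefForm {ι : Type*} {l : Filter ι} {F : ι → ℝ → ℝ} {f : ℝ → ℝ}
    (hF : ∀ u, Tendsto (fun i => F i u) l (𝓝 (f u))) :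
    Tendsto (fun i => posDefForm (F i) x c) l (𝓝 (posDefForm f x c)) :=
  tendsto_finsetSum _ fun _ _ => tendsto_finsetSum _ fun _ _ => (hF _).const_mul _

end posDefForm

theorem integrable_mul_cos_mul {μ : Measure ℝ} {w : ℝ → ℝ} (hw : Integrable w μ) (u : ℝ) :
    Integrable (fun s => w s * Real.cos (s * u)) μ :=
  hw.mul_bdd (by fun_prop) (ae_of_all _ fun _ => Real.abs_cos_le_one _)

namespace IsPositiveDefinite

variable {f g : ℝ → ℝ}

theorem const {a : ℝ} (ha : 0 ≤ a) : IsPositiveDefinite fun _ => a := fun n x c => by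
  rw [posDefForm_const]
  exact mul_nonneg ha (Complex.normSq_nonneg _)

theorem add (hf : IsPositiveDefinite f) (hg : IsPositiveDefinite g) :
    IsPositiveDefinite fun u => f u + g u := fun n x c => by
  rw [posDefForm_add]
  exact add_nonneg (hf n x c) (hg n x c)

theorem const_mul (hf : IsPositiveDefinite f) {a : ℝ} (ha : 0 ≤ a) :
    IsPositiveDefinite fun u => a * f u := fun n x c => by
  rw [posDefForm_const_mul]
  exact mul_nonneg ha (hf n x c)

theorem mul_cos (hf : IsPositiveDefinite f) (t : ℝ) :
    IsPositiveDefinite fun u => f u * Real.cos (t * u) := fun n x c => by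
  rw [posDefForm_mul_cos]
  exact add_nonneg (hf _ _ _) (hf _ _ _)

theorem integral {α : Type*} [MeasurableSpace α] {μ : Measure α} {F : α → ℝ → ℝ}
    (hF : ∀ᵐ s ∂μ, IsPositiveDefinite (F s)) (hint : ∀ u, Integrable (fun s => F s u) μ) :
    IsPositiveDefinite fun u => ∫ s, F s u ∂μ := fun n x c => by
  rw [posDefForm_integral x c hint]
  exact integral_nonneg_of_ae (hF.mono fun s hs => hs n x c)

theorem of_tendsto {ι : Type*} {l : Filter ι} [l.NeBot] {F : ι → ℝ → ℝ}
    (hF : ∀ i, IsPositiveDefinite (F i)) (hlim : ∀ u, Tendsto (fun i => F i u) l (𝓝 (f u))) :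
    IsPositiveDefinite f := fun n x c =>
  ge_of_tendsto' (tendsto_posDefForm x c hlim) fun i => hF i n x c

theorem mul_integral_cos (hf : IsPositiveDefinite f) {μ : Measure ℝ} {w : ℝ → ℝ}
    (hw : Integrable w μ) (hw₀ : ∀ᵐ s ∂μ, 0 ≤ w s) :
    IsPositiveDefinite fun u => f u * ∫ s, w s * Real.cos (s * u) ∂μ := by
  have := integral (F := fun s u => w s * (f u * Real.cos (s * u)))
    (hw₀.mono fun s hs => (hf.mul_cos s).const_mul hs) fun u => ?_
  · simpa only [mul_left_comm _ (f _), integral_const_mul] using this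
  · simpa only [mul_left_comm _ (f u)] using
      (integrable_mul_cos_mul hw u).const_mul (f u)

theorem exp_of_mul (q : ℝ → ℝ)
    (hq : ∀ f, IsPositiveDefinite f → IsPositiveDefinite fun u => f u * q u) :
    IsPositiveDefinite fun u => Real.exp (q u) := by
  have hpow (m : ℕ) : IsPositiveDefinite fun u => q u ^ m := by
    induction m with
    | zero => simpa only [pow_zero] using const zero_le_one
    | succ m ih => simpa only [pow_succ] using hq _ ih
  have hsum (N : ℕ) : IsPositiveDefinite fun u => ∑ m ∈ Finset.range N, q u ^ m / m.factorial := by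
    induction N with
    | zero => simpa only [Finset.sum_range_zero] using const le_rfl
    | succ N ih =>
      simpa only [Finset.sum_range_succ, div_eq_inv_mul] using
        ih.add ((hpow N).const_mul (by positivity))
  refine of_tendsto (l := atTop) hsum fun u => ?_
  rw [Real.exp_eq_exp_ℝ]
  exact (NormedSpace.expSeries_div_hasSum_exp (q u)).tendsto_sum_nat

theorem exp_neg_integral_one_sub_cos {μ : Measure ℝ} {w : ℝ → ℝ} (hw : Integrable w μ)
    (hw₀ : ∀ᵐ s ∂μ, 0 ≤ w s) :
    IsPositiveDefinite fun u => Real.exp (-∫ s, w s * (1 - Real.cos (s * u)) ∂μ) := by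
  have hexp := (exp_of_mul _ fun f hf => hf.mul_integral_cos hw hw₀).const_mul
    (Real.exp_nonneg (-∫ s, w s ∂μ))
  convert hexp using 2 with u
  simp only [mul_sub, mul_one, integral_sub hw (integrable_mul_cos_mul hw u),
    ← Real.exp_add]
  rw [neg_sub, sub_eq_neg_add]

end IsPositiveDefinite

section Levy

variable {β : ℝ}

theorem integrableOn_rpow_mul_one_sub_cos (hβ₀ : 0 < β) (hβ₂ : β < 2) (u : ℝ) :
    IntegrableOn (fun s => s ^ (-1 - β) * (1 - Real.cos (s * u))) (Ioi 0) := by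
  have hmeas : AEStronglyMeasurable (fun s : ℝ => s ^ (-1 - β) * (1 - Real.cos (s * u))) :=
    (by fun_prop : Measurable _).aestronglyMeasurable
  have h₀ : IntegrableOn (fun s => s ^ (-1 - β) * (1 - Real.cos (s * u))) (Ioc 0 1) := by
    have hdom : IntegrableOn (fun s : ℝ => u ^ 2 / 2 * s ^ (1 - β)) (Ioc 0 1) := by
      have : IntegrableOn (fun s : ℝ => s ^ (1 - β)) (Ioc 0 1) := by
        rw [integrableOn_Ioc_iff_integrableOn_Ioo]
        exact (intervalIntegral.integrableOn_Ioo_rpow_iff one_pos).mpr (by linarith)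
      exact this.const_mul _
    refine hdom.mono' hmeas.restrict <| (ae_restrict_iff' measurableSet_Ioc).mpr <|
      ae_of_all _ fun s hs => ?_
    have h1 : 1 - Real.cos (s * u) ≤ (s * u) ^ 2 / 2 := by
      linarith [Real.one_sub_sq_div_two_le_cos (x := s * u)]
    rw [Real.norm_of_nonneg (mul_nonneg (Real.rpow_nonneg hs.1.le _)
      (by linarith [Real.cos_le_one (s * u)]))]
    calc s ^ (-1 - β) * (1 - Real.cos (s * u)) ≤ s ^ (-1 - β) * ((s * u) ^ 2 / 2) :=
          mul_le_mul_of_nonneg_left h1 (Real.rpow_nonneg hs.1.le _)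
      _ = u ^ 2 / 2 * (s ^ (-1 - β) * s ^ (2 : ℝ)) := by rw [Real.rpow_two]; ring
      _ = u ^ 2 / 2 * s ^ (1 - β) := by rw [← Real.rpow_add hs.1]; ring_nf
  have h₁ : IntegrableOn (fun s => s ^ (-1 - β) * (1 - Real.cos (s * u))) (Ioi 1) := by
    have hdom : IntegrableOn (fun s : ℝ => s ^ (-1 - β) * 2) (Ioi 1) :=
      (integrableOn_Ioi_rpow_of_lt (by linarith) one_pos).mul_const 2
    refine hdom.mono' hmeas.restrict <| (ae_restrict_iff' measurableSet_Ioi).mpr <|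
      ae_of_all _ fun s (hs : 1 < s) => ?_
    have hs₀ : 0 ≤ s ^ (-1 - β) := Real.rpow_nonneg (by linarith) _
    rw [Real.norm_of_nonneg (mul_nonneg hs₀ (by linarith [Real.cos_le_one (s * u)]))]
    gcongr
    linarith [Real.neg_one_le_cos (s * u)]
  simpa only [Ioc_union_Ioi_eq_Ioi zero_le_one] using h₀.union h₁

theorem integral_rpow_mul_one_sub_cos_pos (hβ₀ : 0 < β) (hβ₂ : β < 2) :
    0 < ∫ s in Ioi 0, s ^ (-1 - β) * (1 - Real.cos s) := by
  have hint := integrableOn_rpow_mul_one_sub_cos hβ₀ hβ₂ 1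
  simp only [mul_one] at hint
  rw [setIntegral_pos_iff_support_of_nonneg_ae ((ae_restrict_iff' measurableSet_Ioi).mpr <|
    ae_of_all _ fun s (hs : 0 < s) => mul_nonneg (Real.rpow_nonneg hs.le _)
      (by linarith [Real.cos_le_one s])) hint]
  refine lt_of_lt_of_le ?_ (measure_mono (s := Ioo 0 π) fun s hs => ⟨?_, hs.1⟩)
  · simp [Real.pi_pos]
  · have hcos : Real.cos s < 1 := by
      simpa using Real.cos_lt_cos_of_nonneg_of_le_pi le_rfl hs.2.le hs.1
    exact (mul_pos (Real.rpow_pos_of_pos hs.1 _) (by linarith)).ne'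

theorem integral_rpow_mul_one_sub_cos_mul (hβ₀ : 0 < β) (u : ℝ) :
    ∫ s in Ioi 0, s ^ (-1 - β) * (1 - Real.cos (s * u)) =
      |u| ^ β * ∫ s in Ioi 0, s ^ (-1 - β) * (1 - Real.cos s) := by
  rcases eq_or_ne u 0 with rfl | hu
  · simp [Real.zero_rpow hβ₀.ne']
  have ha : 0 < |u| := abs_pos.mpr hu
  have hsubst := integral_comp_mul_left_Ioi (fun s => s ^ (-1 - β) * (1 - Real.cos s)) 0 ha
  rw [mul_zero, smul_eq_mul] at hsubst
  calc ∫ s in Ioi 0, s ^ (-1 - β) * (1 - Real.cos (s * u))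
      = ∫ s in Ioi 0, |u| ^ (1 + β) * ((|u| * s) ^ (-1 - β) * (1 - Real.cos (|u| * s))) := by
        refine setIntegral_congr_fun measurableSet_Ioi fun s (hs : 0 < s) => ?_
        rw [Real.mul_rpow ha.le hs.le, ← mul_assoc, ← mul_assoc, ← Real.rpow_add ha,
          show 1 + β + (-1 - β) = 0 by ring, Real.rpow_zero, one_mul, ← Real.cos_abs (s * u),
          abs_mul, abs_of_pos hs, mul_comm s]
    _ = |u| ^ β * ∫ s in Ioi 0, s ^ (-1 - β) * (1 - Real.cos s) := by
        rw [integral_const_mul, hsubst, ← mul_assoc, ← Real.rpow_neg_one, ← Real.rpow_add ha]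
        ring_nf

end Levy

theorem isPositiveDefinite_exp_neg_abs_rpow_of_lt_two {β : ℝ} (hβ₀ : 0 < β) (hβ₂ : β < 2) :
    IsPositiveDefinite fun u => Real.exp (-|u| ^ β) := by
  set K := ∫ s in Ioi 0, s ^ (-1 - β) * (1 - Real.cos s)
  have hK : 0 < K := integral_rpow_mul_one_sub_cos_pos hβ₀ hβ₂
  set w : ℝ → ℝ := fun s => K⁻¹ * s ^ (-1 - β)
  set a : ℕ → ℝ := fun m => 1 / ((m : ℝ) + 1)
  have hcover : AECover (volume.restrict (Ioi 0)) atTop fun m => Ioc (a m) m :=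
    (aecover_Ioi_of_Ioi tendsto_one_div_add_atTop_nhds_zero_nat).inter
      (aecover_Iic tendsto_natCast_atTop_atTop)
  have hw (m : ℕ) : IntegrableOn w (Ioc (a m) m) (volume.restrict (Ioi 0)) := by
    refine IntegrableOn.restrict <| IntegrableOn.mono_set ?_ Ioc_subset_Icc_self
    refine ContinuousOn.integrableOn_compact isCompact_Icc <|
      continuousOn_const.mul <| continuousOn_id.rpow_const fun s hs => Or.inl ?_
    exact (lt_of_lt_of_le (by positivity) hs.1).ne'
  have hw₀ (m : ℕ) : ∀ᵐ s ∂(volume.restrict (Ioi 0)).restrict (Ioc (a m) m), 0 ≤ w s :=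
    ae_restrict_of_ae <| (ae_restrict_iff' measurableSet_Ioi).mpr <|
      ae_of_all _ fun s (hs : 0 < s) => mul_nonneg (inv_nonneg.mpr hK.le) (Real.rpow_nonneg hs.le _)
  refine IsPositiveDefinite.of_tendsto (l := atTop)
    (fun m => IsPositiveDefinite.exp_neg_integral_one_sub_cos (hw m) (hw₀ m)) fun u => ?_
  have hlim := hcover.integral_tendsto_of_countably_generated
    ((integrableOn_rpow_mul_one_sub_cos hβ₀ hβ₂ u).const_mul K⁻¹)
  rw [integral_const_mul, integral_rpow_mul_one_sub_cos_mul hβ₀, mul_left_comm,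
    inv_mul_cancel₀ hK.ne', mul_one] at hlim
  simp only [w, mul_assoc]
  exact (Real.continuous_exp.tendsto _).comp hlim.neg

theorem isPositiveDefinite_exp_neg_abs_rpow {β : ℝ} (hβ₀ : 0 < β) (hβ₂ : β ≤ 2) :
    IsPositiveDefinite fun u => Real.exp (-|u| ^ β) := by
  rcases hβ₂.lt_or_eq with hlt | rfl
  · exact isPositiveDefinite_exp_neg_abs_rpow_of_lt_two hβ₀ hlt
  have hβ : Tendsto (fun m : ℕ => 2 - 1 / ((m : ℝ) + 1)) atTop (𝓝 2) := by
    simpa using tendsto_one_div_add_atTop_nhds_zero_nat.const_sub (2 : ℝ)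
  refine IsPositiveDefinite.of_tendsto (l := atTop)
    (F := fun (m : ℕ) u => Real.exp (-|u| ^ (2 - 1 / ((m : ℝ) + 1)))) (fun m =>
    isPositiveDefinite_exp_neg_abs_rpow_of_lt_two ?_ ?_) fun u => ?_
  · have : 1 / ((m : ℝ) + 1) ≤ 1 := div_le_one_of_le₀ (by simp) (by positivity)
    linarith
  · simpa using Nat.cast_add_one_pos m
  · exact (Real.continuous_exp.tendsto _).comp
      ((Real.continuousAt_const_rpow' two_ne_zero).tendsto.comp hβ).neg

/-- **Positive-definiteness of the generalized Gaussian kernel.**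
For every shape parameter `β` with `0 < β ≤ 2`, the function
`f x = exp (-|x| ^ β)` is positive definite: for every `n`, every tuple of
points `x : Fin n → ℝ` and complex coefficients `c : Fin n → ℂ`, the sum
`∑ i j, c i * conj (c j) * f (x i - x j)` has nonnegative real part. -/
theorem ggd_kernel_posdef (β : ℝ) (hβ₀ : 0 < β) (hβ₂ : β ≤ 2) :
    ∀ (n : ℕ) (x : Fin n → ℝ) (c : Fin n → ℂ),
      0 ≤ (∑ i : Fin n, ∑ j : Fin n,
        c i * (starRingEnd ℂ) (c j) *
          (Real.exp (-(|x i - x j| ^ β)) : ℂ)).re := fun n x c => by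
  rw [re_sum_mul_ofReal_eq_posDefForm x c fun u => Real.exp (-|u| ^ β)]
  exact isPositiveDefinite_exp_neg_abs_rpow hβ₀ hβ₂ n x c
end

section
/- For every β with 0 < β < 2, the strict inequality Γ(5/β) · Γ(1/β) > 3 · Γ(3/β)² holds (equivalently, the generalized Gaussian distribution with shape parameter β < 2 is leptokurtic, i.e., has positive excess kurtosis), with equality when β = 2. -/
/-!
Put `a = 1/β > 1/2`. By Euler's limit formula `Γ(s) = lim n^s n! / ∏_{j ≤ n} (s + j)`, and since
`5a + a + 3/2 + 3/2 = 5/2 + 1/2 + 3a + 3a`, the quotient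
`Γ(5a) Γ(a) Γ(3/2)² / (Γ(5/2) Γ(1/2) Γ(3a)²)` is the infinite product over `j` of
`(5/2 + j)(1/2 + j)(3a + j)² / ((5a + j)(a + j)(3/2 + j)²)`. Each factor exceeds `1` by
`2 (a - 1/2) j ((2a + 1) j + 6a) / ((5a + j)(a + j)(3/2 + j)²)`, strictly so for `j = 1`;
and `Γ(5/2) Γ(1/2) = 3 Γ(3/2)²`.
-/

open Finset Filter
open scoped Nat

namespace Real

section GammaProducts

variable {ι : Type*} (s : Finset ι) (x y : ι → ℝ)

theorem prod_GammaSeq {n : ℕ} (hn : n ≠ 0) :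
    ∏ i ∈ s, GammaSeq (x i) n =
      (n : ℝ) ^ (∑ i ∈ s, x i) * (n ! : ℝ) ^ #s / ∏ j ∈ range (n + 1), ∏ i ∈ s, (x i + j) := by
  simp only [GammaSeq]
  rw [prod_div_distrib, prod_mul_distrib, ← rpow_sum_of_pos (by positivity), prod_const,
    Finset.prod_comm]

variable {s x y}

theorem prod_GammaSeq_mul_le_prod_GammaSeq_mul (hx : ∀ i ∈ s, 0 < x i)
    (hsum : ∑ i ∈ s, x i = ∑ i ∈ s, y i)
    (hle : ∀ j : ℕ, ∏ i ∈ s, (x i + j) ≤ ∏ i ∈ s, (y i + j)) {j₀ n : ℕ} (hj₀ : j₀ ≤ n)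
    (hn : n ≠ 0) :
    (∏ i ∈ s, GammaSeq (y i) n) * ∏ i ∈ s, (y i + j₀) ≤
      (∏ i ∈ s, GammaSeq (x i) n) * ∏ i ∈ s, (x i + j₀) := by
  have hx_pos (j : ℕ) : 0 < ∏ i ∈ s, (x i + j) :=
    prod_pos fun i hi => by have := hx i hi; positivity
  have hy_pos (j : ℕ) : 0 < ∏ i ∈ s, (y i + j) := (hx_pos j).trans_le (hle j)
  have hmem : j₀ ∈ range (n + 1) := mem_range.2 (by omega)
  have hrest : ∏ j ∈ (range (n + 1)).erase j₀, ∏ i ∈ s, (x i + j) ≤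
      ∏ j ∈ (range (n + 1)).erase j₀, ∏ i ∈ s, (y i + j) :=
    prod_le_prod (fun j _ => (hx_pos j).le) fun j _ => hle j
  -- after cancelling the `j₀`-th factor, only the remaining factors of the Gauss products differ
  rw [prod_GammaSeq s x hn, prod_GammaSeq s y hn, hsum, ← prod_erase_mul _ _ hmem,
    ← prod_erase_mul _ _ hmem, div_mul_eq_mul_div, div_mul_eq_mul_div,
    mul_div_mul_right _ _ (hy_pos j₀).ne', mul_div_mul_right _ _ (hx_pos j₀).ne']
  exact div_le_div_of_nonneg_left (by positivity) (prod_pos fun j _ => hx_pos j) hrest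

theorem prod_Gamma_lt_prod_Gamma (hx : ∀ i ∈ s, 0 < x i) (hsum : ∑ i ∈ s, x i = ∑ i ∈ s, y i)
    (hle : ∀ j : ℕ, ∏ i ∈ s, (x i + j) ≤ ∏ i ∈ s, (y i + j)) {j₀ : ℕ}
    (hlt : ∏ i ∈ s, (x i + j₀) < ∏ i ∈ s, (y i + j₀)) :
    ∏ i ∈ s, Gamma (y i) < ∏ i ∈ s, Gamma (x i) := by
  have hlim : (∏ i ∈ s, Gamma (y i)) * ∏ i ∈ s, (y i + j₀) ≤
      (∏ i ∈ s, Gamma (x i)) * ∏ i ∈ s, (x i + j₀) := by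
    refine le_of_tendsto_of_tendsto
      ((tendsto_finsetProd s fun i _ => GammaSeq_tendsto_Gamma (y i)).mul_const _)
      ((tendsto_finsetProd s fun i _ => GammaSeq_tendsto_Gamma (x i)).mul_const _) ?_
    filter_upwards [eventually_ge_atTop (max j₀ 1)] with n hn
    exact prod_GammaSeq_mul_le_prod_GammaSeq_mul hx hsum hle (by omega) (by omega)
  have hΓx : 0 < ∏ i ∈ s, Gamma (x i) := prod_pos fun i hi => Gamma_pos_of_pos (hx i hi)
  exact lt_of_mul_lt_mul_right (hlim.trans_lt (mul_lt_mul_of_pos_left hlt hΓx))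
    (hlt.trans' (prod_pos fun i hi => by have := hx i hi; positivity)).le

end GammaProducts

theorem Gamma_five_halves_mul_Gamma_one_half :
    Gamma (5 / 2) * Gamma (1 / 2) = 3 * Gamma (3 / 2) ^ 2 := by
  have h₃ : Gamma (3 / 2) = 1 / 2 * Gamma (1 / 2) := by
    rw [← Gamma_add_one (by norm_num)]; norm_num
  have h₅ : Gamma (5 / 2) = 3 / 2 * Gamma (3 / 2) := by
    rw [← Gamma_add_one (by norm_num)]; norm_num
  rw [h₅, h₃]
  ring

end Real

open Real

lemma kurtosis_factor_sub (a j : ℝ) :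
    (5 / 2 + j) * (1 / 2 + j) * (3 * a + j) * (3 * a + j) -
        (5 * a + j) * (a + j) * (3 / 2 + j) * (3 / 2 + j) =
      2 * (a - 1 / 2) * j * ((2 * a + 1) * j + 6 * a) := by
  ring

theorem three_mul_Gamma_three_mul_sq_lt {a : ℝ} (ha : 1 / 2 < a) :
    3 * Gamma (3 * a) ^ 2 < Gamma (5 * a) * Gamma a := by
  have ha' : 0 < a - 1 / 2 := by linarith
  have key := prod_Gamma_lt_prod_Gamma (s := univ) (x := ![5 * a, a, 3 / 2, 3 / 2])
    (y := ![5 / 2, 1 / 2, 3 * a, 3 * a]) (j₀ := 1) ?_ ?_ ?_ ?_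
  rotate_left
  · intro i _
    fin_cases i <;> norm_num <;> linarith
  all_goals simp only [Fin.prod_univ_four, Fin.sum_univ_four, Matrix.cons_val, Nat.cast_one] at *
  · ring
  · exact fun j => sub_nonneg.1 (kurtosis_factor_sub a j ▸ by positivity)
  · exact sub_pos.1 (kurtosis_factor_sub a 1 ▸ by positivity)
  have hΓ : 0 < Gamma (3 / 2) ^ 2 := pow_pos (Gamma_pos_of_pos (by norm_num)) 2
  refine lt_of_mul_lt_mul_right ?_ hΓ.le
  calc 3 * Gamma (3 * a) ^ 2 * Gamma (3 / 2) ^ 2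
      = Gamma (5 / 2) * Gamma (1 / 2) * Gamma (3 * a) * Gamma (3 * a) := by
        rw [Gamma_five_halves_mul_Gamma_one_half]; ring
    _ < Gamma (5 * a) * Gamma a * Gamma (3 / 2) * Gamma (3 / 2) := key
    _ = Gamma (5 * a) * Gamma a * Gamma (3 / 2) ^ 2 := by ring

/-- **Leptokurtosis of the generalized Gaussian for `β < 2`.**
For every `β` with `0 < β < 2`, `Γ(5/β) Γ(1/β) > 3 Γ(3/β)²` (i.e. the
generalized Gaussian distribution with shape parameter `β < 2` has positive
excess kurtosis), with equality when `β = 2`. -/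
theorem ggd_leptokurtic_of_beta_lt_two :
    (∀ β : ℝ, 0 < β → β < 2 →
        3 * Real.Gamma (3 / β) ^ 2 < Real.Gamma (5 / β) * Real.Gamma (1 / β)) ∧
      Real.Gamma (5 / 2) * Real.Gamma (1 / 2) = 3 * Real.Gamma (3 / 2) ^ 2 := by
  refine ⟨fun β hβ₀ hβ₂ => ?_, Gamma_five_halves_mul_Gamma_one_half⟩
  rw [show 3 / β = 3 * (1 / β) by ring, show 5 / β = 5 * (1 / β) by ring]
  exact three_mul_Gamma_three_mul_sq_lt (by rw [div_lt_div_iff₀ two_pos hβ₀]; linarith)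
end

section
/- Let n ≥ 2 and let X₁, …, X_n be i.i.d. real random variables on a probability space with mean μ, variance σ² = E[(X₁−μ)²] > 0, and finite fourth central moment μ₄ = E[(X₁−μ)⁴] < ∞; let κ = μ₄/σ⁴ − 3 be the excess kurtosis, and let s² = (1/(n−1))∑(X_i − X̄)² with X̄ = (1/n)∑X_i. Then among all estimators of the form c · s² with c ∈ ℝ, the mean squared error E[(c·s² − σ²)²] is minimized at c* = (κ/n + (n+1)/(n−1))⁻¹; that is, for every c ∈ ℝ, E[(c*·s² − σ²)²] ≤ E[(c·s² − σ²)²]. -/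
/-!
The mean squared error `c ↦ E[(c s² - σ²)²] = c² E[s⁴] - 2 c σ² E[s²] + σ⁴` is a quadratic in `c`,
minimised at `c = σ² E[s²] / E[s⁴]`. For the centred variables `Yᵢ = Xᵢ - μ` one has
`(n - 1) s² = ∑ Yᵢ² - (∑ Yᵢ)² / n`, so `E[s²]` and `E[s⁴]` are determined by the joint moments
of `∑ Yᵢ` and `∑ Yᵢ²` up to order four, which are computed by adding one independent summand
at a time. This gives `E[s²] = σ²` and
`E[s⁴] = μ₄ / n + (n² - 2n + 3) σ⁴ / (n (n - 1)) = σ⁴ (κ / n + (n + 1) / (n - 1))`,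
whence the minimiser is `c*`.
-/

open MeasureTheory ProbabilityTheory Finset

noncomputable def sampleVariance {ι : Type*} [Fintype ι] (v : ι → ℝ) : ℝ :=
  (1 / ((Fintype.card ι : ℝ) - 1)) * ∑ i, (v i - (1 / Fintype.card ι : ℝ) * ∑ j, v j) ^ 2

section SampleVariance

variable {ι : Type*} [Fintype ι]

lemma sampleVariance_sub_const (v : ι → ℝ) (μ : ℝ) :
    sampleVariance (fun i => v i - μ) = sampleVariance v := by
  unfold sampleVariance
  congr 1
  refine sum_congr rfl fun i _ => ?_
  have : Nonempty ι := ⟨i⟩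
  have hN : (Fintype.card ι : ℝ) ≠ 0 := Nat.cast_ne_zero.mpr Fintype.card_ne_zero
  rw [sum_sub_distrib, sum_const, card_univ, nsmul_eq_mul]
  field_simp
  ring

lemma sampleVariance_eq_sum_sq_sub (v : ι → ℝ) :
    sampleVariance v =
      (∑ i, v i ^ 2 - (∑ i, v i) ^ 2 / Fintype.card ι) / (Fintype.card ι - 1) := by
  rcases isEmpty_or_nonempty ι with hι | hι
  · simp [sampleVariance]
  have hN : (Fintype.card ι : ℝ) ≠ 0 := Nat.cast_ne_zero.mpr Fintype.card_ne_zero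
  simp only [sampleVariance, sub_sq, sum_add_distrib, sum_sub_distrib, ← sum_mul, ← mul_sum,
    sum_const, card_univ, nsmul_eq_mul]
  field_simp
  ring

end SampleVariance

section Moments

variable {Ω : Type*} [MeasurableSpace Ω] {P : Measure Ω}

lemma MeasureTheory.memLp_of_integrable_pow_of_even {f : Ω → ℝ} (hf : AEStronglyMeasurable f P)
    {k : ℕ} (hk : Even k) (hk0 : k ≠ 0) (h : Integrable (fun ω => f ω ^ k) P) :
    MemLp f k P := by
  rw [← integrable_norm_rpow_iff hf (by exact_mod_cast hk0) (by simp)]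
  simpa [Real.norm_eq_abs, hk.pow_abs] using h

lemma ProbabilityTheory.iIndepFun.indepFun_sum_sq_sum_of_notMem {ι : Type*} {Y : ι → Ω → ℝ}
    (hY : iIndepFun Y P) (hmeas : ∀ i, Measurable (Y i)) {s : Finset ι} {a : ι} (ha : a ∉ s) :
    IndepFun (fun ω => (∑ i ∈ s, Y i ω ^ 2, ∑ i ∈ s, Y i ω)) (Y a) P := by
  classical
  have hZ : iIndepFun (fun i ω => (Y i ω ^ 2, Y i ω)) P :=
    hY.comp (fun _ x => (x ^ 2, x)) fun _ => by fun_prop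
  convert (hZ.indepFun_finsetSum_of_notMem (fun i => by fun_prop) ha).comp
    measurable_id measurable_snd using 1
  · ext ω <;> simp [Prod.fst_sum, Prod.snd_sum]
  · rfl

lemma integral_finsetSum_eq_card_mul {ι : Type*} {f : ι → Ω → ℝ} (hf : ∀ i, Integrable (f i) P)
    {m : ℝ} (h : ∀ i, ∫ ω, f i ω ∂P = m) (s : Finset ι) :
    ∫ ω, ∑ i ∈ s, f i ω ∂P = #s * m := by
  rw [integral_finsetSum _ fun i _ => hf i]
  simp [h]

variable [IsProbabilityMeasure P]

lemma MeasureTheory.MemLp.integrable_pow_of_le {f : Ω → ℝ} {p k : ℕ} (hf : MemLp f p P)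
    (hk : k ≤ p) : Integrable (fun ω => f ω ^ k) P := by
  have hfk : MemLp f k P := hf.mono_exponent (by exact_mod_cast hk)
  refine (integrable_norm_iff (hf.1.pow k)).mp ?_
  simpa [norm_pow] using hfk.integrable_norm_pow'

lemma MeasureTheory.MemLp.sq_memLp_two {f : Ω → ℝ} (hf : MemLp f 4 P) :
    MemLp (fun ω => f ω ^ 2) 2 P := by
  refine (memLp_two_iff_integrable_sq (hf.1.pow 2)).mpr ?_
  simpa [← pow_mul] using hf.integrable_pow_of_le le_rfl

lemma ProbabilityTheory.IndepFun.integral_add_pow {S Y : Ω → ℝ} {n : ℕ} (h : IndepFun S Y P)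
    (hS : MemLp S n P) (hY : MemLp Y n P) :
    ∫ ω, (S ω + Y ω) ^ n ∂P =
      ∑ j ∈ range (n + 1), (∫ ω, S ω ^ j ∂P) * (∫ ω, Y ω ^ (n - j) ∂P) * n.choose j := by
  have hpow : ∀ j, IndepFun (fun ω => S ω ^ j) (fun ω => Y ω ^ (n - j)) P :=
    fun j => h.comp (measurable_id.pow_const j) (measurable_id.pow_const (n - j))
  simp_rw [add_pow]
  rw [integral_finsetSum]
  · refine sum_congr rfl fun j _ => ?_
    rw [integral_mul_const, (hpow j).integral_fun_mul_eq_mul_integral (hS.1.pow j) (hY.1.pow _)]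
  · intro j hj
    have hjn : j ≤ n := Nat.lt_succ_iff.mp (mem_range.mp hj)
    exact ((hpow j).integrable_mul (hS.integrable_pow_of_le hjn)
      (hY.integrable_pow_of_le (Nat.sub_le n j))).mul_const _

lemma ProbabilityTheory.IndepFun.integral_add_sq {S Y : Ω → ℝ} (h : IndepFun S Y P)
    (hS : MemLp S 2 P) (hY : MemLp Y 2 P) :
    ∫ ω, (S ω + Y ω) ^ 2 ∂P =
      ∫ ω, S ω ^ 2 ∂P + 2 * (∫ ω, S ω ∂P) * (∫ ω, Y ω ∂P) + ∫ ω, Y ω ^ 2 ∂P := by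
  rw [h.integral_add_pow (by exact_mod_cast hS) (by exact_mod_cast hY)]
  simp only [Nat.reduceAdd, sum_range_succ, range_one, sum_singleton, pow_zero, integral_const,
    probReal_univ, smul_eq_mul, mul_one, tsub_zero, one_mul, Nat.choose_zero_right, Nat.cast_one,
    pow_one, Nat.add_one_sub_one, Nat.choose_succ_self_right, Nat.cast_ofNat, tsub_self,
    Nat.choose_self]
  ring

lemma ProbabilityTheory.IndepFun.integral_add_pow_four {S Y : Ω → ℝ} (h : IndepFun S Y P)
    (hS : MemLp S 4 P) (hY : MemLp Y 4 P) (hS0 : ∫ ω, S ω ∂P = 0) (hY0 : ∫ ω, Y ω ∂P = 0) :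
    ∫ ω, (S ω + Y ω) ^ 4 ∂P =
      ∫ ω, S ω ^ 4 ∂P + 6 * (∫ ω, S ω ^ 2 ∂P) * (∫ ω, Y ω ^ 2 ∂P) + ∫ ω, Y ω ^ 4 ∂P := by
  rw [h.integral_add_pow (by exact_mod_cast hS) (by exact_mod_cast hY)]
  simp only [Nat.reduceAdd, sum_range_succ, range_one, sum_singleton, pow_zero, integral_const,
    probReal_univ, smul_eq_mul, mul_one, tsub_zero, one_mul, Nat.choose, Nat.cast_one, pow_one, hS0,
    Nat.add_one_sub_one, zero_mul, add_zero, Nat.cast_ofNat, Nat.reduceSub, hY0, mul_zero,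
    tsub_self]
  ring

lemma ProbabilityTheory.IndepFun.integral_add_sq_mul_add_sq {U S Y : Ω → ℝ}
    (h : IndepFun (fun ω => (U ω, S ω)) Y P) (hU : MemLp U 2 P) (hS : MemLp S 4 P)
    (hY : MemLp Y 4 P) (hS0 : ∫ ω, S ω ∂P = 0) (hY0 : ∫ ω, Y ω ∂P = 0) :
    ∫ ω, (U ω + Y ω ^ 2) * (S ω + Y ω) ^ 2 ∂P = ∫ ω, U ω * S ω ^ 2 ∂P
      + (∫ ω, U ω ∂P + ∫ ω, S ω ^ 2 ∂P) * ∫ ω, Y ω ^ 2 ∂P + ∫ ω, Y ω ^ 4 ∂P := by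
  have factor : ∀ f : ℝ × ℝ → ℝ, Measurable f → Integrable (fun ω => f (U ω, S ω)) P →
      ∀ k ≤ 4, Integrable (fun ω => f (U ω, S ω) * Y ω ^ k) P ∧
        ∫ ω, f (U ω, S ω) * Y ω ^ k ∂P = (∫ ω, f (U ω, S ω) ∂P) * ∫ ω, Y ω ^ k ∂P := by
    intro f hf hfi k hk
    have hfk := h.comp hf (measurable_id.pow_const k)
    exact ⟨hfk.integrable_mul hfi (hY.integrable_pow_of_le hk),
      hfk.integral_fun_mul_eq_mul_integral hfi.1 (hY.1.pow k)⟩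
  have hS2 : MemLp S 2 P := hS.mono_exponent (by norm_num)
  obtain ⟨i1, e1⟩ := factor (fun p => 2 * (p.1 * p.2)) (by fun_prop)
    ((hU.integrable_mul hS2).const_mul 2) 1 (by norm_num)
  obtain ⟨i2, e2⟩ := factor (fun p => p.1 + p.2 ^ 2) (by fun_prop)
    ((hU.integrable one_le_two).add (hS.integrable_pow_of_le (k := 2) (by norm_num))) 2
    (by norm_num)
  obtain ⟨i3, e3⟩ := factor (fun p => 2 * p.2) (by fun_prop)
    ((hS.integrable (by norm_num)).const_mul 2) 3 (by norm_num)
  have i0 : Integrable (fun ω => U ω * S ω ^ 2) P := hU.integrable_mul hS.sq_memLp_two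
  have i4 : Integrable (fun ω => Y ω ^ 4) P := hY.integrable_pow_of_le le_rfl
  calc ∫ ω, (U ω + Y ω ^ 2) * (S ω + Y ω) ^ 2 ∂P
      = ∫ ω, U ω * S ω ^ 2 + 2 * (U ω * S ω) * Y ω ^ 1 + (U ω + S ω ^ 2) * Y ω ^ 2
          + 2 * S ω * Y ω ^ 3 + Y ω ^ 4 ∂P := by
        congr 1 with ω; ring
    _ = ∫ ω, U ω * S ω ^ 2 ∂P + ∫ ω, 2 * (U ω * S ω) * Y ω ^ 1 ∂P
          + ∫ ω, (U ω + S ω ^ 2) * Y ω ^ 2 ∂P + ∫ ω, 2 * S ω * Y ω ^ 3 ∂P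
          + ∫ ω, Y ω ^ 4 ∂P := by
        rw [integral_add (by fun_prop) i4, integral_add (by fun_prop) i3,
          integral_add (by fun_prop) i2, integral_add i0 i1]
    _ = _ := by
        rw [e1, e2, e3, integral_add (hU.integrable one_le_two)
          (hS.integrable_pow_of_le (k := 2) (by norm_num))]
        simp [hY0, hS0, integral_const_mul]

section SumsOfIndependent

variable {ι : Type*} {Y : ι → Ω → ℝ}

lemma ProbabilityTheory.iIndepFun.integral_sum_sq (hY : iIndepFun Y P)
    (hmeas : ∀ i, Measurable (Y i)) (hL2 : ∀ i, MemLp (Y i) 2 P) {σ2 : ℝ}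
    (h1 : ∀ i, ∫ ω, Y i ω ∂P = 0) (h2 : ∀ i, ∫ ω, Y i ω ^ 2 ∂P = σ2) (s : Finset ι) :
    ∫ ω, (∑ i ∈ s, Y i ω) ^ 2 ∂P = #s * σ2 := by
  classical
  induction s using Finset.induction_on with
  | empty => simp
  | insert a s ha ih =>
    have hind : IndepFun (fun ω => ∑ i ∈ s, Y i ω) (Y a) P :=
      (hY.indepFun_sum_sq_sum_of_notMem hmeas ha).comp measurable_snd measurable_id
    simp_rw [sum_insert ha, add_comm (Y a _)]
    rw [hind.integral_add_sq (memLp_finsetSum _ fun i _ => hL2 i) (hL2 a), ih, h1, h2,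
      card_insert_of_notMem ha]
    push_cast
    ring

lemma ProbabilityTheory.iIndepFun.integral_sum_sq_sq (hY : iIndepFun Y P)
    (hmeas : ∀ i, Measurable (Y i)) (hL4 : ∀ i, MemLp (Y i) 4 P) {σ2 m4 : ℝ}
    (h2 : ∀ i, ∫ ω, Y i ω ^ 2 ∂P = σ2) (h4 : ∀ i, ∫ ω, Y i ω ^ 4 ∂P = m4) (s : Finset ι) :
    ∫ ω, (∑ i ∈ s, Y i ω ^ 2) ^ 2 ∂P = #s * m4 + #s * (#s - 1) * σ2 ^ 2 := by
  classical
  have h4' : ∀ i, ∫ ω, (Y i ω ^ 2) ^ 2 ∂P = m4 := fun i => by simp_rw [← pow_mul]; exact h4 i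
  induction s using Finset.induction_on with
  | empty => simp
  | insert a s ha ih =>
    have hind : IndepFun (fun ω => ∑ i ∈ s, Y i ω ^ 2) (fun ω => Y a ω ^ 2) P :=
      (hY.indepFun_sum_sq_sum_of_notMem hmeas ha).comp measurable_fst (measurable_id.pow_const 2)
    simp_rw [sum_insert ha, add_comm (Y a _ ^ 2)]
    rw [hind.integral_add_sq (memLp_finsetSum _ fun i _ => (hL4 i).sq_memLp_two)
      (hL4 a).sq_memLp_two, ih, h4',
      integral_finsetSum_eq_card_mul (fun i => (hL4 i).integrable_pow_of_le (by norm_num)) h2,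
      h2, card_insert_of_notMem ha]
    push_cast
    ring

lemma ProbabilityTheory.iIndepFun.integral_sum_pow_four (hY : iIndepFun Y P)
    (hmeas : ∀ i, Measurable (Y i)) (hL4 : ∀ i, MemLp (Y i) 4 P) {σ2 m4 : ℝ}
    (h1 : ∀ i, ∫ ω, Y i ω ∂P = 0) (h2 : ∀ i, ∫ ω, Y i ω ^ 2 ∂P = σ2)
    (h4 : ∀ i, ∫ ω, Y i ω ^ 4 ∂P = m4) (s : Finset ι) :
    ∫ ω, (∑ i ∈ s, Y i ω) ^ 4 ∂P = #s * m4 + 3 * #s * (#s - 1) * σ2 ^ 2 := by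
  classical
  have hL2 : ∀ i, MemLp (Y i) 2 P := fun i => (hL4 i).mono_exponent (by norm_num)
  induction s using Finset.induction_on with
  | empty => simp
  | insert a s ha ih =>
    have hind : IndepFun (fun ω => ∑ i ∈ s, Y i ω) (Y a) P :=
      (hY.indepFun_sum_sq_sum_of_notMem hmeas ha).comp measurable_snd measurable_id
    have hS0 : ∫ ω, ∑ i ∈ s, Y i ω ∂P = 0 := by
      rw [integral_finsetSum_eq_card_mul (fun i => (hL2 i).integrable one_le_two) h1, mul_zero]
    simp_rw [sum_insert ha, add_comm (Y a _)]
    rw [hind.integral_add_pow_four (memLp_finsetSum _ fun i _ => hL4 i) (hL4 a) hS0 (h1 a), ih,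
      hY.integral_sum_sq hmeas hL2 h1 h2, h2, h4, card_insert_of_notMem ha]
    push_cast
    ring

lemma ProbabilityTheory.iIndepFun.integral_sum_sq_mul_sq_sum (hY : iIndepFun Y P)
    (hmeas : ∀ i, Measurable (Y i)) (hL4 : ∀ i, MemLp (Y i) 4 P) {σ2 m4 : ℝ}
    (h1 : ∀ i, ∫ ω, Y i ω ∂P = 0) (h2 : ∀ i, ∫ ω, Y i ω ^ 2 ∂P = σ2)
    (h4 : ∀ i, ∫ ω, Y i ω ^ 4 ∂P = m4) (s : Finset ι) :
    ∫ ω, (∑ i ∈ s, Y i ω ^ 2) * (∑ i ∈ s, Y i ω) ^ 2 ∂P = #s * m4 + #s * (#s - 1) * σ2 ^ 2 := by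
  classical
  have hL2 : ∀ i, MemLp (Y i) 2 P := fun i => (hL4 i).mono_exponent (by norm_num)
  induction s using Finset.induction_on with
  | empty => simp
  | insert a s ha ih =>
    have hS0 : ∫ ω, ∑ i ∈ s, Y i ω ∂P = 0 := by
      rw [integral_finsetSum_eq_card_mul (fun i => (hL2 i).integrable one_le_two) h1, mul_zero]
    simp_rw [sum_insert ha, add_comm (Y a _ ^ 2), add_comm (Y a _)]
    rw [(hY.indepFun_sum_sq_sum_of_notMem hmeas ha).integral_add_sq_mul_add_sq
      (memLp_finsetSum _ fun i _ => (hL4 i).sq_memLp_two) (memLp_finsetSum _ fun i _ => hL4 i)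
      (hL4 a) hS0 (h1 a), ih, hY.integral_sum_sq hmeas hL2 h1 h2,
      integral_finsetSum_eq_card_mul (fun i => (hL2 i).integrable_sq) h2, h2, h4,
      card_insert_of_notMem ha]
    push_cast
    ring

end SumsOfIndependent

section SampleVarianceMoments

variable {ι : Type*} [Fintype ι] {Y : ι → Ω → ℝ}

lemma memLp_sampleVariance (hL4 : ∀ i, MemLp (Y i) 4 P) :
    MemLp (fun ω => sampleVariance (fun i => Y i ω)) 2 P := by
  simp_rw [sampleVariance_eq_sum_sq_sub, div_eq_mul_inv]
  exact (((memLp_finsetSum _ fun i _ => (hL4 i).sq_memLp_two).sub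
    ((memLp_finsetSum _ fun i _ => hL4 i).sq_memLp_two.mul_const _)).mul_const _)

lemma integral_sampleVariance (hY : iIndepFun Y P) (hmeas : ∀ i, Measurable (Y i))
    (hL2 : ∀ i, MemLp (Y i) 2 P) {σ2 : ℝ} (h1 : ∀ i, ∫ ω, Y i ω ∂P = 0)
    (h2 : ∀ i, ∫ ω, Y i ω ^ 2 ∂P = σ2) (hN : 1 < Fintype.card ι) :
    ∫ ω, sampleVariance (fun i => Y i ω) ∂P = σ2 := by
  have hN1 : (Fintype.card ι : ℝ) - 1 ≠ 0 := (sub_pos.mpr (by exact_mod_cast hN)).ne'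
  simp_rw [sampleVariance_eq_sum_sq_sub]
  rw [integral_div, integral_sub (integrable_finsetSum _ fun i _ => (hL2 i).integrable_sq)
    ((memLp_finsetSum _ fun i _ => hL2 i).integrable_sq.div_const _), integral_div,
    integral_finsetSum_eq_card_mul (fun i => (hL2 i).integrable_sq) h2,
    hY.integral_sum_sq hmeas hL2 h1 h2, card_univ]
  field_simp

lemma integral_sampleVariance_sq (hY : iIndepFun Y P) (hmeas : ∀ i, Measurable (Y i))
    (hL4 : ∀ i, MemLp (Y i) 4 P) {σ2 m4 : ℝ} (h1 : ∀ i, ∫ ω, Y i ω ∂P = 0)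
    (h2 : ∀ i, ∫ ω, Y i ω ^ 2 ∂P = σ2) (h4 : ∀ i, ∫ ω, Y i ω ^ 4 ∂P = m4)
    (hN : 1 < Fintype.card ι) :
    ∫ ω, sampleVariance (fun i => Y i ω) ^ 2 ∂P =
      m4 / Fintype.card ι
        + (Fintype.card ι ^ 2 - 2 * Fintype.card ι + 3)
          / (Fintype.card ι * (Fintype.card ι - 1)) * σ2 ^ 2 := by
  have hN1 : (Fintype.card ι : ℝ) - 1 ≠ 0 := (sub_pos.mpr (by exact_mod_cast hN)).ne'
  set N : ℝ := (Fintype.card ι : ℝ) with hN_def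
  have hN0 : N ≠ 0 := by positivity
  have hU := memLp_finsetSum (univ : Finset ι) fun i _ => (hL4 i).sq_memLp_two
  have hS := memLp_finsetSum (univ : Finset ι) fun i _ => hL4 i
  have iU2 : Integrable (fun ω => (∑ i, Y i ω ^ 2) ^ 2) P := hU.integrable_sq
  have iUS2 : Integrable (fun ω => (∑ i, Y i ω ^ 2) * (∑ i, Y i ω) ^ 2) P :=
    hU.integrable_mul hS.sq_memLp_two
  have iS4 : Integrable (fun ω => (∑ i, Y i ω) ^ 4) P := hS.integrable_pow_of_le le_rfl
  have expand : ∀ ω, sampleVariance (fun i => Y i ω) ^ 2 =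
      ((∑ i, Y i ω ^ 2) ^ 2 - 2 / N * ((∑ i, Y i ω ^ 2) * (∑ i, Y i ω) ^ 2)
        + (∑ i, Y i ω) ^ 4 / N ^ 2) / (N - 1) ^ 2 := fun ω => by
    rw [sampleVariance_eq_sum_sq_sub, ← hN_def]; field_simp; ring
  simp_rw [expand]
  rw [integral_div, integral_add (by fun_prop) (by fun_prop), integral_sub iU2 (by fun_prop),
    integral_const_mul, integral_div, hY.integral_sum_sq_sq hmeas hL4 h2 h4,
    hY.integral_sum_sq_mul_sq_sum hmeas hL4 h1 h2 h4, hY.integral_sum_pow_four hmeas hL4 h1 h2 h4]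
  simp only [card_univ, ← hN_def]
  field_simp
  ring

end SampleVarianceMoments

lemma integral_mul_sub_sq {T : Ω → ℝ} (hT : MemLp T 2 P) (c a : ℝ) :
    ∫ ω, (c * T ω - a) ^ 2 ∂P =
      c ^ 2 * ∫ ω, T ω ^ 2 ∂P - 2 * c * a * ∫ ω, T ω ∂P + a ^ 2 := by
  have hT1 := hT.integrable one_le_two
  have hT2 := hT.integrable_sq
  have expand : ∀ ω, (c * T ω - a) ^ 2 = c ^ 2 * T ω ^ 2 - 2 * c * a * T ω + a ^ 2 :=
    fun ω => by ring
  simp_rw [expand]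
  rw [integral_add (by fun_prop) (by fun_prop), integral_sub (by fun_prop) (by fun_prop),
    integral_const_mul, integral_const_mul]
  simp

lemma integral_div_mul_sub_sq_le {T : Ω → ℝ} (hT : MemLp T 2 P) (a c : ℝ) :
    ∫ ω, (a * (∫ ω, T ω ∂P) / (∫ ω, T ω ^ 2 ∂P) * T ω - a) ^ 2 ∂P ≤
      ∫ ω, (c * T ω - a) ^ 2 ∂P := by
  rw [integral_mul_sub_sq hT, integral_mul_sub_sq hT]
  have hmom : (∫ ω, T ω ∂P) ^ 2 ≤ ∫ ω, T ω ^ 2 ∂P := by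
    have := variance_nonneg T P
    rw [variance_eq_sub hT] at this
    simpa using this
  set A := ∫ ω, T ω ∂P
  set B := ∫ ω, T ω ^ 2 ∂P
  -- If `E[T²] = 0` then also `E[T] = 0`, and the error is `a²` whatever the scalar.
  rcases (sq_nonneg A).trans hmom |>.eq_or_lt with hB | hB
  · have hA : A = 0 := by nlinarith
    simp [← hB, hA]
  · have key : (a * A / B) ^ 2 * B - 2 * (a * A / B) * a * A + a ^ 2 =
        c ^ 2 * B - 2 * c * a * A + a ^ 2 - (c * B - a * A) ^ 2 / B := by
      field_simp; ring
    rw [key]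
    linarith [div_nonneg (sq_nonneg (c * B - a * A)) hB.le]

end Moments

/-- **MSE-best scalar multiple of the sample variance.**
Let `n ≥ 2` and let `X₁, …, X_n` be i.i.d. with mean `μ`, variance `σ² > 0`,
finite fourth central moment `μ₄`, excess kurtosis `κ = μ₄/σ⁴ - 3`, and sample
variance `s² = (1/(n-1)) ∑ (X i - X̄)²`.  Among all estimators `c · s²`, the
mean squared error `E[(c s² - σ²)²]` is minimized at
`c* = (κ/n + (n+1)/(n-1))⁻¹`. -/
theorem mse_best_biased_variance_estimator
    {Ω : Type*} [MeasurableSpace Ω] (P : Measure Ω) [IsProbabilityMeasure P]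
    (n : ℕ) (hn : 2 ≤ n)
    (X : Fin n → Ω → ℝ) (hmeas : ∀ i, Measurable (X i))
    (hindep : iIndepFun X P)
    (hident : ∀ i, IdentDistrib (X i) (X ⟨0, by omega⟩) P P)
    (μ σ2 μ4 κ cstar : ℝ)
    (hμ : μ = ∫ ω, X ⟨0, by omega⟩ ω ∂P)
    (hσ2 : σ2 = ∫ ω, (X ⟨0, by omega⟩ ω - μ) ^ 2 ∂P) (hσ2pos : 0 < σ2)
    (hμ4 : μ4 = ∫ ω, (X ⟨0, by omega⟩ ω - μ) ^ 4 ∂P)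
    (hint4 : Integrable (fun ω => (X ⟨0, by omega⟩ ω - μ) ^ 4) P)
    (hκ : κ = μ4 / σ2 ^ 2 - 3)
    (hcstar : cstar = (κ / n + ((n : ℝ) + 1) / ((n : ℝ) - 1))⁻¹)
    (Xbar s2 : Ω → ℝ)
    (hXbar : ∀ ω, Xbar ω = (1 / n : ℝ) * ∑ i, X i ω)
    (hs2 : ∀ ω, s2 ω = (1 / ((n : ℝ) - 1)) * ∑ i, (X i ω - Xbar ω) ^ 2) :
    ∀ c : ℝ,
      ∫ ω, (cstar * s2 ω - σ2) ^ 2 ∂P ≤ ∫ ω, (c * s2 ω - σ2) ^ 2 ∂P := by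
  set i₀ : Fin n := ⟨0, by omega⟩
  set Y : Fin n → Ω → ℝ := fun i ω => X i ω - μ
  have hYid : ∀ i, IdentDistrib (Y i) (Y i₀) P P :=
    fun i => (hident i).comp (measurable_id.sub_const μ)
  have hYmeas : ∀ i, Measurable (Y i) := fun i => (hmeas i).sub_const μ
  have hYindep : iIndepFun Y P := hindep.comp _ fun _ => measurable_id.sub_const μ
  have hL4 : ∀ i, MemLp (Y i) 4 P := fun i => (hYid i).memLp_iff.mpr <|
    memLp_of_integrable_pow_of_even (hYmeas i₀).aestronglyMeasurable (by decide) (by norm_num)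
      hint4
  have hX₀ : Integrable (X i₀) P := by
    simpa [Y, sub_eq_add_neg] using (hL4 i₀).integrable (by norm_num)
  have h1 : ∀ i, ∫ ω, Y i ω ∂P = 0 := fun i => by
    rw [(hYid i).integral_eq, integral_sub hX₀ (integrable_const μ)]
    simp [← hμ]
  have h2 : ∀ i, ∫ ω, Y i ω ^ 2 ∂P = σ2 := fun i =>
    ((hYid i).comp (measurable_id.pow_const 2)).integral_eq.trans hσ2.symm
  have h4 : ∀ i, ∫ ω, Y i ω ^ 4 ∂P = μ4 := fun i =>
    ((hYid i).comp (measurable_id.pow_const 4)).integral_eq.trans hμ4.symm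
  have hs2Y : s2 = fun ω => sampleVariance (fun i => Y i ω) := by
    ext ω
    rw [hs2, sampleVariance_sub_const (fun i => X i ω), sampleVariance]
    simp [hXbar]
  have hcard : 1 < Fintype.card (Fin n) := by rw [Fintype.card_fin]; omega
  have hL2 : ∀ i, MemLp (Y i) 2 P := fun i => (hL4 i).mono_exponent (by norm_num)
  have hcstar' : cstar = σ2 * (∫ ω, s2 ω ∂P) / ∫ ω, s2 ω ^ 2 ∂P := by
    have hn1 : (n : ℝ) - 1 ≠ 0 := (sub_pos.mpr (by exact_mod_cast hn)).ne'
    rw [hs2Y, integral_sampleVariance hYindep hYmeas hL2 h1 h2 hcard,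
      integral_sampleVariance_sq hYindep hYmeas hL4 h1 h2 h4 hcard, Fintype.card_fin, hcstar, hκ]
    field_simp
    ring
  intro c
  rw [hcstar']
  exact integral_div_mul_sub_sq_le (hs2Y ▸ memLp_sampleVariance hL4) σ2 c
end
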